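/- arXiv:2302.01091 — 2 statements merged into one kernel-verified Lean document; each statement's English description precedes it below -/
import Mathlib

section
/- For real z with 0 ≤ z < 1: ∑_{(j,k): j,k ≥ 1, gcd(j,k)=1} (1/k) · log(1 - z^k/2^j) = log(1 - z). Equivalently, the infinite product ∏_{gcd(j,k)=1} (1 - z^k/2^j)^{1/k} over positive coprime pairs (j,k) equals 1 - z exactly. -/
/-!
Expanding the logarithm, `(1/k) log (1 - y^j z^k) = -∑_{n ≥ 1} y^{nj} z^{nk} / (nk)`.
Every pair of positive integers is uniquely `(nj, nk)` with `j, k` coprime, so summing these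
series over the coprime pairs regroups the absolutely convergent double series
`-∑_{J, K ≥ 1} y^J z^K / K`, which factors as
`(∑_J y^J) log (1 - z) = (y / (1 - y)) log (1 - z)`.
-/

open Real

abbrev CoprimePNatPairs := {p : ℕ+ × ℕ+ // Nat.gcd (p.1 : ℕ) (p.2 : ℕ) = 1}

def coprimePNatPairsProdEquiv : CoprimePNatPairs × ℕ+ ≃ ℕ+ × ℕ+ where
  toFun q := (q.2 * q.1.1.1, q.2 * q.1.1.2)
  invFun p :=
    let g := Nat.gcd p.1 p.2
    have hg : 0 < g := Nat.gcd_pos_of_pos_left _ p.1.pos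
    (⟨(⟨p.1 / g, Nat.div_pos (Nat.gcd_le_left _ p.1.pos) hg⟩,
        ⟨p.2 / g, Nat.div_pos (Nat.gcd_le_right _ p.2.pos) hg⟩),
      Nat.coprime_div_gcd_div_gcd hg⟩, ⟨g, hg⟩)
  left_inv := by
    rintro ⟨⟨⟨j, k⟩, h⟩, n⟩
    have hg : Nat.gcd (n * j : ℕ) (n * k) = n := by rw [Nat.gcd_mul_left, h, mul_one]
    refine Prod.ext (Subtype.ext (Prod.ext (PNat.eq ?_) (PNat.eq ?_))) (PNat.eq hg)
    · exact (congrArg _ hg).trans (Nat.mul_div_cancel_left _ n.pos)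
    · exact (congrArg _ hg).trans (Nat.mul_div_cancel_left _ n.pos)
  right_inv := by
    rintro ⟨J, K⟩
    exact Prod.ext (PNat.eq (Nat.mul_div_cancel' (Nat.gcd_dvd_left _ _)))
      (PNat.eq (Nat.mul_div_cancel' (Nat.gcd_dvd_right _ _)))

lemma hasSum_pnat_pow_div {x : ℝ} (hx : |x| < 1) :
    HasSum (fun n : ℕ+ => x ^ (n : ℕ) / n) (-log (1 - x)) :=
  hasSum_pnat_iff_hasSum_succ (f := fun n : ℕ => x ^ n / n).2
    (by simpa using hasSum_pow_div_log_of_abs_lt_one hx)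

lemma hasSum_pnat_geometric {x : ℝ} (hx : |x| < 1) :
    HasSum (fun n : ℕ+ => x ^ (n : ℕ)) (x / (1 - x)) := by
  have hx1 : 1 - x ≠ 0 := by linarith [le_abs_self x]
  have hsum : x / (1 - x) + x ^ 0 = (1 - x)⁻¹ := by field_simp; ring
  refine hasSum_pnat_iff (f := fun n : ℕ => x ^ n).2 ?_
  rw [hsum]
  exact hasSum_geometric_of_abs_lt_one hx

section

variable {y z : ℝ}

lemma abs_pow_mul_pow_lt_one (hy : |y| ≤ 1) (hz : |z| < 1) (j : ℕ) {k : ℕ} (hk : k ≠ 0) :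
    |y ^ j * z ^ k| < 1 := by
  rw [abs_mul, abs_pow, abs_pow]
  exact mul_lt_one_of_nonneg_of_lt_one_right (pow_le_one₀ (abs_nonneg y) hy) (by positivity)
    (pow_lt_one₀ (abs_nonneg z) hz hk)

noncomputable def logSeriesTerm (y z : ℝ) (q : ℕ+ × ℕ+) : ℝ :=
  -(y ^ (q.1 : ℕ) * z ^ (q.2 : ℕ) / q.2)

lemma hasSum_logSeriesTerm (hy : |y| < 1) (hz : |z| < 1) :
    HasSum (logSeriesTerm y z) (y / (1 - y) * log (1 - z)) := by
  have hgeom := hasSum_pnat_geometric hy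
  have hlog : HasSum (fun n : ℕ+ => -(z ^ (n : ℕ) / n)) (log (1 - z)) := by
    simpa using (hasSum_pnat_pow_div hz).neg
  have hsummable : Summable fun q : ℕ+ × ℕ+ => y ^ (q.1 : ℕ) * -(z ^ (q.2 : ℕ) / q.2) :=
    summable_mul_of_summable_norm hgeom.summable.norm hlog.summable.norm
  refine (hgeom.mul hlog hsummable).congr_fun fun q => ?_
  simp only [logSeriesTerm]
  ring

lemma hasSum_logSeriesTerm_mul (hy : |y| ≤ 1) (hz : |z| < 1) (j k : ℕ+) :
    HasSum (fun n : ℕ+ => logSeriesTerm y z (n * j, n * k))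
      (1 / k * log (1 - y ^ (j : ℕ) * z ^ (k : ℕ))) := by
  have h := (hasSum_pnat_pow_div (abs_pow_mul_pow_lt_one hy hz j k.ne_zero)).mul_left
    (-(1 / k : ℝ))
  rw [neg_mul_neg] at h
  refine h.congr_fun fun n => ?_
  simp only [logSeriesTerm, PNat.mul_coe, Nat.cast_mul, mul_pow, ← pow_mul]
  field_simp
  ring

theorem hasSum_coprime_log (hy : |y| < 1) (hz : |z| < 1) :
    HasSum (fun p : CoprimePNatPairs =>
        1 / (p.1.2 : ℝ) * log (1 - y ^ (p.1.1 : ℕ) * z ^ (p.1.2 : ℕ)))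
      (y / (1 - y) * log (1 - z)) :=
  (coprimePNatPairsProdEquiv.hasSum_iff.2 (hasSum_logSeriesTerm hy hz)).prod_fiberwise
    fun p => hasSum_logSeriesTerm_mul hy.le hz p.1.1 p.1.2

theorem hasProd_coprime_rpow (hy : |y| < 1) (hz : |z| < 1) :
    HasProd (fun p : CoprimePNatPairs =>
        (1 - y ^ (p.1.1 : ℕ) * z ^ (p.1.2 : ℕ)) ^ (1 / (p.1.2 : ℝ)))
      ((1 - z) ^ (y / (1 - y))) := by
  have hpos {x : ℝ} (hx : |x| < 1) : 0 < 1 - x := sub_pos.2 (abs_lt.1 hx).2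
  convert (hasSum_coprime_log hy hz).rexp using 1
  · ext p
    rw [Function.comp_apply,
      rpow_def_of_pos (hpos (abs_pow_mul_pow_lt_one hy.le hz _ p.1.2.ne_zero)), mul_comm]
  · rw [rpow_def_of_pos (hpos hz), mul_comm]

end

theorem stmt_6 (z : ℝ) (hz0 : 0 ≤ z) (hz1 : z < 1) :
    (∑' p : {p : ℕ+ × ℕ+ // Nat.gcd (p.1 : ℕ) (p.2 : ℕ) = 1},
        (1 / (p.val.2 : ℝ)) *
          Real.log (1 - z ^ (p.val.2 : ℕ) / (2 : ℝ) ^ (p.val.1 : ℕ)) =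
      Real.log (1 - z)) ∧
    (∏' p : {p : ℕ+ × ℕ+ // Nat.gcd (p.1 : ℕ) (p.2 : ℕ) = 1},
        (1 - z ^ (p.val.2 : ℕ) / (2 : ℝ) ^ (p.val.1 : ℕ)) ^ ((1 : ℝ) / (p.val.2 : ℝ)) =
      1 - z) := by
  have hy : |(1 / 2 : ℝ)| < 1 := by norm_num [abs_of_pos]
  have hz : |z| < 1 := abs_lt.2 ⟨by linarith, hz1⟩
  have hterm (j k : ℕ) : (1 / 2 : ℝ) ^ j * z ^ k = z ^ k / 2 ^ j := by rw [one_div_pow]; ring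
  have hexp : (1 / 2 : ℝ) / (1 - 1 / 2) = 1 := by norm_num
  have hsum := hasSum_coprime_log hy hz
  have hprod := hasProd_coprime_rpow hy hz
  simp only [hterm, hexp, one_mul, rpow_one] at hsum hprod
  exact ⟨hsum.tsum_eq, hprod.tprod_eq⟩
end

section
/- As formal power series in q and t (or for real/complex |q|, |t| < 1): ∏_{k ≥ 0} 1/(1 - q·t^{2^k}) = ∏_{(j,k): 0 ≤ j ≤ k} (1 + q^{2^j} t^{2^k}). Combinatorially: the number of vector partitions of ⟨j,k⟩ into distinct parts of the form ⟨2^a, 2^b⟩ with 0 ≤ a ≤ b equals the number of partitions of ⟨j,k⟩ into unrestricted parts of the form ⟨1, 2^b⟩ with b ≥ 0. -/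
/-!
Expanding each factor on the left by Euler's identity `1 / (1 - x) = ∏_{m ≥ 0} (1 + x ^ 2 ^ m)`
(binary expansion, or the telescoping `(1 - x) ∏_{m < n} (1 + x ^ 2 ^ m) = 1 - x ^ 2 ^ n`)
with `x = q t ^ 2 ^ k` gives the double product `∏_{k, m} (1 + q ^ 2 ^ m t ^ 2 ^ (m + k))`,
which is the right-hand side after the substitution `(j, k) ↦ (j, k - j)`. Absolute convergence
of the double product justifies exchanging the order of the products.
-/

open Filter Topology

lemma mul_prod_range_one_add_pow_two_pow {R : Type*} [CommRing R] (x : R) (n : ℕ) :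
    (1 - x) * ∏ m ∈ Finset.range n, (1 + x ^ 2 ^ m) = 1 - x ^ 2 ^ n := by
  induction n with
  | zero => simp
  | succ n ih => rw [Finset.prod_range_succ, ← mul_assoc, ih, pow_succ, pow_mul]; ring

lemma summable_pow_two_pow {r : ℝ} (h0 : 0 ≤ r) (h1 : r < 1) : Summable fun n : ℕ => r ^ 2 ^ n :=
  (summable_geometric_of_lt_one h0 h1).of_nonneg_of_le (fun _ => by positivity)
    fun n => pow_le_pow_of_le_one h0 h1.le n.lt_two_pow_self.le

section
variable {𝕜 : Type*} [NormedField 𝕜]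

lemma summable_norm_pow_two_pow {x : 𝕜} (hx : ‖x‖ < 1) : Summable fun n : ℕ => ‖x ^ 2 ^ n‖ := by
  simpa only [norm_pow] using summable_pow_two_pow (norm_nonneg x) hx

lemma hasProd_one_add_pow_two_pow [CompleteSpace 𝕜] {x : 𝕜} (hx : ‖x‖ < 1) :
    HasProd (fun m : ℕ => 1 + x ^ 2 ^ m) (1 - x)⁻¹ := by
  have hmult : Multipliable fun m : ℕ => 1 + x ^ 2 ^ m :=
    multipliable_one_add_of_summable (summable_norm_pow_two_pow hx)
  have hx1 : 1 - x ≠ 0 := by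
    intro h
    simp [← sub_eq_zero.mp h] at hx
  have hlim : Tendsto (fun n : ℕ => x ^ 2 ^ n) atTop (𝓝 0) :=
    (tendsto_pow_atTop_nhds_zero_of_norm_lt_one hx).comp
      (tendsto_pow_atTop_atTop_of_one_lt one_lt_two)
  rw [hmult.hasProd_iff_tendsto_nat]
  have := ((tendsto_const_nhds (x := (1 : 𝕜))).sub hlim).const_mul (1 - x)⁻¹
  simp only [sub_zero, mul_one] at this
  refine this.congr fun n => ?_
  rw [← mul_prod_range_one_add_pow_two_pow, inv_mul_cancel_left₀ hx1]

lemma summable_norm_pow_two_pow_mul_pow_two_pow {q t : 𝕜} (hq : ‖q‖ < 1) (ht : ‖t‖ < 1) :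
    Summable fun p : ℕ × ℕ => ‖q ^ 2 ^ p.1 * t ^ 2 ^ p.2‖ :=
  Summable.mul_norm (f := fun n : ℕ => q ^ 2 ^ n) (g := fun n : ℕ => t ^ 2 ^ n)
    (summable_norm_pow_two_pow hq) (summable_norm_pow_two_pow ht)

end

def pairsLeEquiv : ℕ × ℕ ≃ {p : ℕ × ℕ // p.1 ≤ p.2} where
  toFun p := ⟨(p.2, p.2 + p.1), Nat.le_add_right _ _⟩
  invFun p := (p.val.2 - p.val.1, p.val.1)
  left_inv := by rintro ⟨k, m⟩; simp
  right_inv := by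
    rintro ⟨⟨j, k⟩, h⟩
    exact Subtype.ext (Prod.ext rfl (Nat.add_sub_cancel' h))

lemma pow_two_pow_pairsLeEquiv {R : Type*} [CommMonoid R] (q t : R) (p : ℕ × ℕ) :
    q ^ 2 ^ (pairsLeEquiv p).1.1 * t ^ 2 ^ (pairsLeEquiv p).1.2 = (q * t ^ 2 ^ p.1) ^ 2 ^ p.2 := by
  simp only [pairsLeEquiv, Equiv.coe_fn_mk, mul_pow, ← pow_mul, ← pow_add, add_comm]

theorem stmt_19 (q t : ℝ) (hq : |q| < 1) (ht : |t| < 1) :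
    ∏' k : ℕ, 1 / (1 - q * t ^ 2 ^ k) =
      ∏' p : {p : ℕ × ℕ // p.1 ≤ p.2}, (1 + q ^ 2 ^ p.val.1 * t ^ 2 ^ p.val.2) := by
  rw [← Real.norm_eq_abs] at hq ht
  have hx (k : ℕ) : ‖q * t ^ 2 ^ k‖ < 1 := by
    rw [norm_mul, norm_pow]
    exact mul_lt_one_of_nonneg_of_lt_one_left (norm_nonneg q) hq (pow_le_one₀ (norm_nonneg t) ht.le)
  have hmult := multipliable_one_add_of_summable
    ((summable_norm_pow_two_pow_mul_pow_two_pow hq ht).subtype {p : ℕ × ℕ | p.1 ≤ p.2})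
  have hf := pairsLeEquiv.multipliable_iff.mpr hmult
  simp only [Function.comp_def, pow_two_pow_pairsLeEquiv] at hf
  rw [← pairsLeEquiv.tprod_eq]
  simp only [pow_two_pow_pairsLeEquiv]
  rw [hf.tprod_prod' fun k => (hasProd_one_add_pow_two_pow (hx k)).multipliable]
  exact tprod_congr fun k => by rw [one_div, (hasProd_one_add_pow_two_pow (hx k)).tprod_eq]
end
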